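/- Let G be a connected loopless multigraph with two vertices v and w of odd degree joined to each other by exactly two parallel edges. If G − v is connected and G − {v,w} is connected, then there exists an edge f of G such that G \ {f} admits an odd 3-edge-coloring. -/

import Mathlib

/-!
Delete one edge `e₁` of the bouquet and look for the colour classes as `B`, `C` and the rest.
Inside a spanning tree, every even set `T` of vertices is the set of odd-degree vertices of a
sub-forest `J` (a `T`-join), and a rooted forest always splits into two odd subgraphs: colour it
from the roots outwards, giving all edges at a vertex one colour, except a single edge when the
degree is even.

If `|V|` is even, `G - e₁` is still connected (through `e₂`). Taking for `T` the vertices of even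
degree in `G - e₁`, an even set by the handshake lemma, makes the complement of `J` odd at every
vertex. If `|V|` is odd, work in the connected graph `G - {v, w}` instead, with the edges from `v`
into it hung on the forest as pendant edges. There are `deg v - 2` of them, an odd number, so
exactly one of the two classes has even degree at `v`, and `e₂` goes into that one.
-/

open Finset
open scoped Classical

lemma Finset.natCast_card_symmDiff {α : Type*} [DecidableEq α] (s t : Finset α) :
    (#(symmDiff s t) : ZMod 2) = #s + #t := by
  have h := card_union_add_card_inter s t
  rw [← sup_eq_union, ← symmDiff_sup_inf, sup_eq_union,
    card_union_of_disjoint (disjoint_symmDiff_inf s t)] at h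
  have h2 := congrArg (Nat.cast : ℕ → ZMod 2) h
  push_cast at h2
  rw [← h2, inf_eq_inter, add_assoc, ← two_mul, show (2 : ZMod 2) = 0 from rfl, zero_mul, add_zero]

lemma Finset.natCast_card_filter_eq_zero {α : Type*} (s : Finset α) (g : α → ZMod 2) :
    (#{x ∈ s | g x = 0} : ZMod 2) = ∑ x ∈ s, (g x + 1) := by
  rw [natCast_card_filter]
  refine sum_congr rfl fun x _ => ?_
  generalize g x = a
  revert a; decide

lemma ZMod.ite_eq_zero_eq_add_one (a : ZMod 2) : (if a = 0 then 1 else 0) = a + 1 := by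
  revert a; decide

lemma exists_rank_descent {α : Type*} (R : α → α → Prop) (r : α) :
    ∃ rank : α → ℕ, ∀ x, Relation.ReflTransGen R x r → x ≠ r → ∃ y, R x y ∧ rank y < rank x := by
  -- `reach n x`: there is an `R`-path of length `n` from `x` to `r`
  let reach : ℕ → α → Prop := fun n => (fun Q x => ∃ y, R x y ∧ Q y)^[n] (· = r)
  have reach_succ : ∀ n x, reach (n + 1) x ↔ ∃ y, R x y ∧ reach n y := fun n x => by
    simp only [reach, Function.iterate_succ_apply']
  have exists_reach : ∀ x, Relation.ReflTransGen R x r → ∃ n, reach n x := by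
    intro x hx
    induction hx using Relation.ReflTransGen.head_induction_on with
    | refl => exact ⟨0, rfl⟩
    | head hxy _ ih =>
      obtain ⟨n, hn⟩ := ih
      exact ⟨n + 1, (reach_succ n _).2 ⟨_, hxy, hn⟩⟩
  refine ⟨fun x => if h : ∃ n, reach n x then Nat.find h else 0, fun x hx hxr => ?_⟩
  have h := exists_reach x hx
  obtain ⟨n, hn⟩ : ∃ n, Nat.find h = n + 1 :=
    Nat.exists_eq_succ_of_ne_zero fun h0 => hxr (by simpa [h0, reach] using Nat.find_spec h)
  obtain ⟨y, hxy, hy⟩ := (reach_succ n x).1 (hn ▸ Nat.find_spec h)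
  refine ⟨y, hxy, ?_⟩
  simp only [dif_pos h, dif_pos (⟨n, hy⟩ : ∃ n, reach n y), hn]
  exact Nat.lt_succ_of_le (Nat.find_min' _ hy)

lemma exists_eq_apply_of_rank {α β : Type*} [Inhabited β] (rank : α → ℕ) (F : α → (α → β) → β)
    (hF : ∀ x g g', (∀ y, rank y < rank x → g y = g' y) → F x g = F x g') :
    ∃ c : α → β, ∀ x, c x = F x c := by
  let c : α → β := (measure rank).wf.fix
    fun x rec => F x fun y => if h : rank y < rank x then rec y h else default
  refine ⟨c, fun x => ?_⟩
  rw [show c x = _ from (measure rank).wf.fix_eq _ x]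
  exact hF x _ _ fun y hy => by simp [hy, c]

namespace Multigraph

variable {V E : Type*} (ends : E → Sym2 V)

-- a loop at `x` counts once; every graph below is loopless
noncomputable def degree (X : Finset E) (x : V) : ℕ := #{e ∈ X | x ∈ ends e}

def IsOddOn (U : Set V) (X : Finset E) : Prop :=
  ∀ x ∈ U, degree ends X x = 0 ∨ Odd (degree ends X x)

variable {ends}

lemma degree_union {X Y : Finset E} (h : Disjoint X Y) (x : V) :
    degree ends (X ∪ Y) x = degree ends X x + degree ends Y x := by
  rw [degree, filter_union, card_union_of_disjoint (disjoint_filter_filter h)]; rfl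

lemma degree_sdiff_add {X Y : Finset E} (h : Y ⊆ X) (x : V) :
    degree ends (X \ Y) x + degree ends Y x = degree ends X x := by
  rw [← degree_union sdiff_disjoint, sdiff_union_of_subset h]

lemma degree_symmDiff (X Y : Finset E) (x : V) :
    (degree ends (symmDiff X Y) x : ZMod 2) = degree ends X x + degree ends Y x := by
  have : (symmDiff X Y).filter (x ∈ ends ·) =
      symmDiff (X.filter (x ∈ ends ·)) (Y.filter (x ∈ ends ·)) := by
    ext; simp only [mem_filter, mem_symmDiff]; tauto
  rw [degree, this, Finset.natCast_card_symmDiff]; rfl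

lemma degree_singleton (e : E) (x : V) :
    degree ends {e} x = if x ∈ ends e then 1 else 0 := by
  rw [degree, filter_singleton]; split_ifs <;> rfl

lemma degree_eq_zero_iff {X : Finset E} {x : V} : degree ends X x = 0 ↔ ∀ e ∈ X, x ∉ ends e := by
  simp [degree, filter_eq_empty_iff]

variable (ends) in
structure SpanningTree (S : Set E) (U : Set V) (r : V) where
  rank : V → ℕ
  parent : V → V
  parentEdge : V → E
  parent_mem : ∀ x ∈ U, x ≠ r → parent x ∈ U
  rank_parent_lt : ∀ x ∈ U, x ≠ r → rank (parent x) < rank x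
  parentEdge_mem : ∀ x ∈ U, x ≠ r → parentEdge x ∈ S
  ends_parentEdge : ∀ x ∈ U, x ≠ r → ends (parentEdge x) = s(x, parent x)

lemma nonempty_spanningTree [Nonempty E] {S : Set E} {U : Set V} {r : V}
    (hconn : ∀ u ∈ U, Relation.ReflTransGen
      (fun a b => a ∈ U ∧ b ∈ U ∧ ∃ e ∈ S, ends e = s(a, b)) r u) :
    Nonempty (SpanningTree ends S U r) := by
  set R : V → V → Prop := fun a b => a ∈ U ∧ b ∈ U ∧ ∃ e ∈ S, ends e = s(a, b)
  have hsymm : ∀ a b, R a b → R b a := fun a b ⟨ha, hb, e, he, hab⟩ =>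
    ⟨hb, ha, e, he, hab.trans Sym2.eq_swap⟩
  obtain ⟨rank, hrank⟩ := exists_rank_descent R r
  have step : ∀ x, ∃ y e, x ∈ U → x ≠ r → y ∈ U ∧ rank y < rank x ∧ e ∈ S ∧ ends e = s(x, y) := by
    intro x
    by_cases hx : x ∈ U ∧ x ≠ r
    · obtain ⟨y, ⟨-, hy, e, he, hxy⟩, hlt⟩ :=
        hrank x (Relation.reflTransGen_swap.1 (Relation.ReflTransGen.mono hsymm _ _ (hconn x hx.1)))
          hx.2
      exact ⟨y, e, fun _ _ => ⟨hy, hlt, he, hxy⟩⟩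
    · exact ⟨x, Classical.arbitrary E, fun h1 h2 => absurd ⟨h1, h2⟩ hx⟩
  choose parent parentEdge h using step
  exact ⟨⟨rank, parent, parentEdge, fun x hx hr => (h x hx hr).1, fun x hx hr => (h x hx hr).2.1,
    fun x hx hr => (h x hx hr).2.2.1, fun x hx hr => (h x hx hr).2.2.2⟩⟩

variable (ends) in
/-- Each edge `e` of `X` hangs from `low e`. At a vertex `x ∈ U`, the only edge of `X` that does not
hang from `x` is its parent edge `up x`, which hangs from a vertex of smaller rank. Nothing is
required at vertices outside `U`, so edges of `X` may leave `U` as pendant edges. -/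
def IsForestOn (U : Set V) (X : Set E) : Prop :=
  ∃ (low : E → V) (up : V → E) (rank : V → ℕ), ∀ e ∈ X, ∀ x ∈ U, x ∈ ends e → low e ≠ x →
    e = up x ∧ rank (low e) < rank x

namespace IsForestOn

variable {U : Set V} {X : Set E}

lemma mono {Y : Set E} (h : IsForestOn ends U X) (hYX : Y ⊆ X) : IsForestOn ends U Y := by
  obtain ⟨low, up, rank, h⟩ := h
  exact ⟨low, up, rank, fun e he => h e (hYX he)⟩

lemma union_of_subsingleton {P : Set E} (h : IsForestOn ends U X)
    (hP : ∀ p ∈ P, (U ∩ {x | x ∈ ends p}).Subsingleton) : IsForestOn ends U (X ∪ P) := by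
  obtain ⟨low, up, rank, h⟩ := h
  refine ⟨fun e => if e ∈ X then low e else if h : ∃ z ∈ U, z ∈ ends e then h.choose else low e,
    up, rank, ?_⟩
  rintro e (he | he) x hx hxe hlow
  · simp only [he, if_true] at hlow ⊢
    exact h e he x hx hxe hlow
  · have hz : ∃ z ∈ U, z ∈ ends e := ⟨x, hx, hxe⟩
    by_cases heX : e ∈ X
    · simp only [heX, if_true] at hlow ⊢
      exact h e heX x hx hxe hlow
    · simp only [heX, if_false, dif_pos hz] at hlow
      exact absurd (hP e he ⟨hz.choose_spec.1, hz.choose_spec.2⟩ ⟨hx, hxe⟩) hlow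

end IsForestOn

namespace SpanningTree

variable {S : Set E} {U : Set V} {r : V} (t : SpanningTree ends S U r)

lemma isForestOn : IsForestOn ends U (t.parentEdge '' (U \ {r})) := by
  have : Nonempty V := ⟨r⟩
  refine ⟨fun e => t.parent (Function.invFunOn t.parentEdge (U \ {r}) e), t.parentEdge, t.rank, ?_⟩
  rintro e ⟨y, hy, rfl⟩ x hx hxe hlow
  set y' := Function.invFunOn t.parentEdge (U \ {r}) (t.parentEdge y)
  have hy' : y' ∈ U \ {r} := Function.invFunOn_mem ⟨y, hy, rfl⟩
  have heq : t.parentEdge y' = t.parentEdge y := Function.invFunOn_eq ⟨y, hy, rfl⟩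
  rw [← heq, t.ends_parentEdge y' hy'.1 hy'.2, Sym2.mem_iff] at hxe
  rcases hxe with rfl | hxe
  · exact ⟨heq.symm, t.rank_parent_lt _ hy'.1 hy'.2⟩
  · exact absurd hxe.symm hlow

lemma mem_of_mem_ends {e : E} (he : e ∈ t.parentEdge '' (U \ {r})) {x : V} (hx : x ∈ ends e) :
    x ∈ U := by
  obtain ⟨y, hy, rfl⟩ := he
  rw [t.ends_parentEdge y hy.1 hy.2, Sym2.mem_iff] at hx
  rcases hx with rfl | rfl
  exacts [hy.1, t.parent_mem y hy.1 hy.2]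

lemma exists_pair_join {u : V} (hu : u ∈ U) :
    ∃ K : Finset E, ↑K ⊆ t.parentEdge '' (U \ {r}) ∧ ∀ x,
      (degree ends K x : ZMod 2) = (if x = u then 1 else 0) + (if x = r then 1 else 0) := by
  obtain ⟨n, hn⟩ : ∃ n, t.rank u = n := ⟨_, rfl⟩
  induction n using Nat.strong_induction_on generalizing u with
  | _ n ih =>
  by_cases hur : u = r
  · subst hur
    exact ⟨∅, by simp, fun x => by simp [degree, ← two_mul, show (2 : ZMod 2) = 0 from rfl]⟩
  have hlt := t.rank_parent_lt u hu hur
  obtain ⟨K, hK, hdeg⟩ := ih _ (hn ▸ hlt) (t.parent_mem u hu hur) rfl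
  refine ⟨symmDiff K {t.parentEdge u}, fun e he => ?_, fun x => ?_⟩
  · rcases mem_symmDiff.1 he with ⟨he, -⟩ | ⟨he, -⟩
    · exact hK he
    · exact ⟨u, ⟨hu, hur⟩, (mem_singleton.1 he).symm⟩
  · have hne : u ≠ t.parent u := fun h => by rw [← h] at hlt; exact lt_irrefl _ hlt
    rw [degree_symmDiff, hdeg, degree_singleton, t.ends_parentEdge u hu hur]
    by_cases h1 : x = u <;> by_cases h2 : x = t.parent u <;> simp_all
    split_ifs <;> decide

lemma exists_join {T : Finset V} (hT : ↑T ⊆ U) (heven : Even #T) :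
    ∃ J : Finset E, ↑J ⊆ t.parentEdge '' (U \ {r}) ∧ ∀ x,
      (degree ends J x : ZMod 2) = if x ∈ T then 1 else 0 := by
  suffices h : ∀ T : Finset V, ↑T ⊆ U → ∃ J : Finset E, ↑J ⊆ t.parentEdge '' (U \ {r}) ∧ ∀ x,
      (degree ends J x : ZMod 2) = (if x ∈ T then 1 else 0) + #T * (if x = r then 1 else 0) by
    obtain ⟨J, hJ, hdeg⟩ := h T hT
    refine ⟨J, hJ, fun x => ?_⟩
    rw [hdeg, (ZMod.natCast_eq_zero_iff_even).2 heven, zero_mul, add_zero]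
  intro T hT
  induction T using Finset.induction_on with
  | empty => exact ⟨∅, by simp, fun x => by simp [degree]⟩
  | insert u T huT ih =>
    obtain ⟨J, hJ, hdegJ⟩ := ih (subset_trans (by simp) hT)
    obtain ⟨K, hK, hdegK⟩ := t.exists_pair_join (hT (mem_insert_self u T))
    refine ⟨symmDiff J K, fun e he => ?_, fun x => ?_⟩
    · rcases mem_symmDiff.1 he with ⟨he, -⟩ | ⟨he, -⟩
      exacts [hJ he, hK he]
    · rw [degree_symmDiff, hdegJ, hdegK, card_insert_of_notMem huT]
      by_cases h1 : x = u <;> by_cases h2 : x ∈ T <;> by_cases h3 : x = r <;> simp_all <;> ring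

end SpanningTree

lemma card_filter_eq_zero_or_odd {S : Finset E} {col : E → Bool} {a : Bool} {o : Option E}
    (hcol : ∀ e ∈ S, col e = (a ^^ decide (o = some e)))
    (hsome : ∀ e₀, o = some e₀ → e₀ ∈ S ∧ Even #S) (hnone : o = none → #S = 0 ∨ Odd #S)
    (b : Bool) : #{e ∈ S | col e = b} = 0 ∨ Odd #{e ∈ S | col e = b} := by
  cases o with
  | none =>
    have hcol : ∀ e ∈ S, col e = a := fun e he => by simpa using hcol e he
    by_cases hb : a = b
    · rw [filter_true_of_mem fun e he => (hcol e he).trans hb]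
      exact hnone rfl
    · refine Or.inl (card_eq_zero.2 (filter_false_of_mem fun e he h => ?_))
      exact hb ((hcol e he).symm.trans h)
  | some e₀ =>
    obtain ⟨he₀, heven⟩ := hsome e₀ rfl
    have hcol : ∀ e ∈ S, col e = (a ^^ decide (e = e₀)) := fun e he => by
      rw [hcol e he]; simp [eq_comm]
    right
    by_cases hb : a = b
    · have : {e ∈ S | col e = b} = S.erase e₀ := by
        ext e
        by_cases he : e ∈ S <;> by_cases h : e = e₀ <;> simp_all
      rw [this, card_erase_of_mem he₀]
      exact Nat.Even.sub_odd (card_pos.2 ⟨e₀, he₀⟩) heven odd_one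
    · have : {e ∈ S | col e = b} = {e₀} := by
        ext e
        by_cases he : e ∈ S <;> by_cases h : e = e₀ <;> simp_all
        exact Bool.eq_not_iff.2 hb
      rw [this, card_singleton]
      exact odd_one

theorem IsForestOn.exists_odd_bicoloring {U : Set V} {X : Finset E} (h : IsForestOn ends U ↑X) :
    ∃ B ⊆ X, IsOddOn ends U B ∧ IsOddOn ends U (X \ B) := by
  obtain ⟨low, up, rank, hX⟩ := h
  let star : V → Finset E := fun x => X.filter (x ∈ ends ·)
  -- `exc x` is the one edge at `x` whose colour differs from the others, if `deg x` is even
  have : ∀ x, ∃ o : Option E, (∀ e₀, o = some e₀ → e₀ ∈ star x ∧ Even #(star x)) ∧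
      (o = none → #(star x) = 0 ∨ Odd #(star x)) := by
    intro x
    by_cases h : Even #(star x) ∧ (star x).Nonempty
    · obtain ⟨e₀, he₀⟩ := h.2
      exact ⟨some e₀, fun e he => Option.some_inj.1 he ▸ ⟨he₀, h.1⟩, nofun⟩
    · refine ⟨none, nofun, fun _ => ?_⟩
      rcases Nat.even_or_odd #(star x) with he | ho
      · exact Or.inl (card_eq_zero.2 (not_nonempty_iff_eq_empty.1 fun hne => h ⟨he, hne⟩))
      · exact Or.inr ho
  choose exc hexc using this
  let HasUp : V → Prop := fun x => x ∈ U ∧ up x ∈ star x ∧ low (up x) ≠ x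
  let colOf : (V → Bool) → E → Bool := fun c e => c (low e) ^^ decide (exc (low e) = some e)
  -- `c x` is the majority colour at `x`, read off from the colour of the parent edge
  obtain ⟨c, hc⟩ := exists_eq_apply_of_rank rank
    (fun x c => if HasUp x then colOf c (up x) ^^ decide (exc x = some (up x)) else true) (by
      intro x g g' hgg'
      by_cases hx : HasUp x
      · have hlt := (hX _ (mem_filter.1 hx.2.1).1 x hx.1 (mem_filter.1 hx.2.1).2 hx.2.2).2
        simp only [hx, if_true, colOf, hgg' _ hlt]
      · simp only [hx, if_false])
  let col := colOf c
  have hcol : ∀ x ∈ U, ∀ e ∈ star x, col e = (c x ^^ decide (exc x = some e)) := by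
    intro x hx e he
    by_cases hlow : low e = x
    · simp only [col, colOf, hlow]
    · obtain rfl : e = up x := (hX e (mem_filter.1 he).1 x hx (mem_filter.1 he).2 hlow).1
      rw [hc x, if_pos ⟨hx, he, hlow⟩, Bool.xor_assoc, Bool.xor_self, Bool.xor_false]
  have hdeg : ∀ b x, degree ends (X.filter (col · = b)) x = #{e ∈ star x | col e = b} := by
    intro b x; simp only [degree, star, filter_filter, and_comm]
  refine ⟨X.filter (col · = true), filter_subset _ _, fun x hx => ?_, fun x hx => ?_⟩
  · rw [hdeg]
    exact card_filter_eq_zero_or_odd (hcol x hx) (hexc x).1 (hexc x).2 true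
  · rw [← filter_not]
    simpa [hdeg] using card_filter_eq_zero_or_odd (hcol x hx) (hexc x).1 (hexc x).2 false

section FintypeVertices

variable [Fintype V]

lemma sum_degree (hloop : ∀ e, ¬ (ends e).IsDiag) (X : Finset E) :
    ∑ x, degree ends X x = 2 * #X := by
  simp only [degree, card_filter]
  rw [sum_comm, mul_comm, ← smul_eq_mul, ← sum_const]
  refine sum_congr rfl fun e _ => ?_
  rw [← Sym2.card_toFinset_of_not_isDiag _ (hloop e), ← card_filter]
  congr 1; ext; simp

lemma sum_natCast_degree (hloop : ∀ e, ¬ (ends e).IsDiag) (X : Finset E) :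
    ∑ x, (degree ends X x : ZMod 2) = 0 := by
  rw [← Nat.cast_sum, sum_degree hloop, Nat.cast_mul, show ((2 : ℕ) : ZMod 2) = 0 from rfl,
    zero_mul]

lemma isOddOn_univ_of_compl_pair {v w : V} {X : Finset E}
    (hW : IsOddOn ends ↑({v, w}ᶜ : Finset V) X) (hv : degree ends X v = 0 ∨ Odd (degree ends X v))
    (hw : degree ends X w = 0 ∨ Odd (degree ends X w)) : IsOddOn ends Set.univ X := by
  intro u _
  by_cases huv : u = v
  · exact huv ▸ hv
  by_cases huw : u = w
  · exact huw ▸ hw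
  exact hW u (by simp [huv, huw])

lemma isOddOn_union_singleton {v w : V} {e₂ : E} (he₂ : ends e₂ = s(v, w)) {B : Finset E}
    (he₂B : e₂ ∉ B) (hB : IsOddOn ends ↑({v, w}ᶜ : Finset V) B) (hBv : Even (degree ends B v))
    (hBw : degree ends B w = 0) : IsOddOn ends Set.univ (B ∪ {e₂}) := by
  have hdeg : ∀ u, degree ends (B ∪ {e₂}) u = degree ends B u + if u ∈ ends e₂ then 1 else 0 :=
    fun u => by rw [degree_union (disjoint_singleton_right.2 he₂B), degree_singleton]
  refine isOddOn_univ_of_compl_pair (v := v) (w := w) (fun u hu => ?_) ?_ ?_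
  · have hu' : u ≠ v ∧ u ≠ w := by simp at hu; tauto
    rw [hdeg, if_neg (by simp [he₂, hu'.1, hu'.2]), add_zero]
    exact hB u hu
  · rw [hdeg, if_pos (by simp [he₂])]
    exact Or.inr hBv.add_one
  · rw [hdeg, hBw, if_pos (by simp [he₂])]
    exact Or.inr odd_one

end FintypeVertices

section FintypeEdges

variable [Fintype E]

lemma ncard_setOf_mem_ends (x : V) : {e | x ∈ ends e}.ncard = degree ends univ x := by
  rw [degree, ← Set.ncard_coe_finset]
  congr 1
  ext e
  simp

variable (ends) in
def IsOddThreeColoring (f : E) (B C : Finset E) : Prop :=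
  Disjoint B C ∧ f ∉ B ∪ C ∧ IsOddOn ends Set.univ B ∧ IsOddOn ends Set.univ C ∧
    IsOddOn ends Set.univ (univ.erase f \ (B ∪ C))

lemma IsOddThreeColoring.exists_fin_three {f : E} {B C : Finset E}
    (h : IsOddThreeColoring ends f B C) :
    ∃ φ : E → Fin 3, ∀ (u : V) (j : Fin 3),
      {e | e ≠ f ∧ φ e = j ∧ u ∈ ends e}.ncard = 0 ∨
        Odd {e | e ≠ f ∧ φ e = j ∧ u ∈ ends e}.ncard := by
  obtain ⟨hBC, hf, hB, hC, hA⟩ := h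
  let φ : E → Fin 3 := fun e => if e ∈ B then 0 else if e ∈ C then 1 else 2
  refine ⟨φ, fun u j => ?_⟩
  suffices ∃ X : Finset E, IsOddOn ends Set.univ X ∧ ∀ e, e ≠ f ∧ φ e = j ↔ e ∈ X by
    obtain ⟨X, hX, hmem⟩ := this
    have : {e | e ≠ f ∧ φ e = j ∧ u ∈ ends e} = ↑(X.filter (u ∈ ends ·)) := by
      ext e; simp only [← hmem, Set.mem_ofPred_eq, coe_filter, and_assoc]
    rw [this, Set.ncard_coe_finset]
    exact hX u trivial
  have hfB : f ∉ B := fun h => hf (mem_union_left _ h)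
  have hfC : f ∉ C := fun h => hf (mem_union_right _ h)
  fin_cases j
  · refine ⟨B, hB, fun e => ?_⟩
    by_cases heB : e ∈ B <;> by_cases heC : e ∈ C <;> simp [φ, heB, heC]
    all_goals rintro rfl; contradiction
  · refine ⟨C, hC, fun e => ?_⟩
    by_cases heB : e ∈ B <;> by_cases heC : e ∈ C <;> simp [φ, heB, heC]
    · exact disjoint_left.1 hBC heB heC
    · rintro rfl; contradiction
  · refine ⟨_, hA, fun e => ?_⟩
    by_cases heB : e ∈ B <;> by_cases heC : e ∈ C <;> simp [φ, heB, heC]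

lemma natCast_degree_erase_sdiff {f : E} {Y : Finset E} (hf : f ∉ Y) (u : V) :
    (degree ends (univ.erase f \ Y) u : ZMod 2) =
      degree ends univ u + degree ends {f} u + degree ends Y u := by
  have h1 := degree_sdiff_add (ends := ends) (show Y ⊆ univ.erase f from
    fun e he => mem_erase.2 ⟨fun h => hf (h ▸ he), mem_univ e⟩) u
  have h2 := degree_sdiff_add (ends := ends) (subset_univ {f}) u
  rw [sdiff_singleton_eq_erase] at h2
  have h1' := congrArg (Nat.cast : ℕ → ZMod 2) h1
  have h2' := congrArg (Nat.cast : ℕ → ZMod 2) h2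
  push_cast at h1' h2'
  rw [eq_sub_of_add_eq h1', eq_sub_of_add_eq h2', CharTwo.sub_eq_add, CharTwo.sub_eq_add]

variable {v w : V}

variable (ends) in
noncomputable def nonBouquetEdges (v w : V) : Finset E := {e | v ∈ ends e ∧ ends e ≠ s(v, w)}

lemma mem_nonBouquetEdges {e : E} :
    e ∈ nonBouquetEdges ends v w ↔ v ∈ ends e ∧ ends e ≠ s(v, w) := by
  simp [nonBouquetEdges]

lemma exists_ends_eq_of_mem_nonBouquetEdges (hloop : ∀ e, ¬ (ends e).IsDiag) {p : E}
    (hp : p ∈ nonBouquetEdges ends v w) : ∃ y, y ≠ v ∧ y ≠ w ∧ ends p = s(v, y) := by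
  obtain ⟨hvp, hpw⟩ := mem_nonBouquetEdges.1 hp
  obtain ⟨y, hy⟩ := Sym2.mem_iff_exists.1 hvp
  refine ⟨y, fun h => hloop p ?_, fun h => hpw (h ▸ hy), hy⟩
  rw [hy, h]; exact Sym2.mk_isDiag_iff.2 rfl

lemma degree_nonBouquetEdges_self :
    degree ends (nonBouquetEdges ends v w) v = #(nonBouquetEdges ends v w) := by
  rw [degree, filter_true_of_mem fun e he => (mem_nonBouquetEdges.1 he).1]

lemma degree_nonBouquetEdges_right (hloop : ∀ e, ¬ (ends e).IsDiag) (hvw : v ≠ w) :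
    degree ends (nonBouquetEdges ends v w) w = 0 := by
  refine degree_eq_zero_iff.2 fun p hp hwp => ?_
  obtain ⟨y, -, hyw, hpy⟩ := exists_ends_eq_of_mem_nonBouquetEdges hloop hp
  rw [hpy, Sym2.mem_iff] at hwp
  rcases hwp with h | h
  exacts [hvw h.symm, hyw h.symm]

lemma card_nonBouquetEdges_add_two {e₁ e₂ : E} (hne : e₁ ≠ e₂) (he₁ : ends e₁ = s(v, w))
    (he₂ : ends e₂ = s(v, w)) (hbouquet : ∀ e, ends e = s(v, w) → e = e₁ ∨ e = e₂) :
    #(nonBouquetEdges ends v w) + 2 = degree ends univ v := by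
  have h2 : degree ends (univ \ nonBouquetEdges ends v w) v = 2 := by
    rw [degree, ← card_pair hne]
    congr 1
    ext e
    simp only [mem_filter, mem_sdiff, mem_univ, true_and, mem_nonBouquetEdges, mem_insert,
      mem_singleton]
    constructor
    · rintro ⟨h1, h2⟩
      exact hbouquet e (by tauto)
    · rintro (rfl | rfl) <;> simp [he₁, he₂]
  rw [← degree_nonBouquetEdges_self, ← h2, add_comm, degree_sdiff_add (subset_univ _)]

lemma subsingleton_of_mem_nonBouquetEdges (hloop : ∀ e, ¬ (ends e).IsDiag) {U : Set V}
    (hvU : v ∉ U) {p : E} (hp : p ∈ nonBouquetEdges ends v w) :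
    (U ∩ {x | x ∈ ends p}).Subsingleton := by
  obtain ⟨y, -, -, hpy⟩ := exists_ends_eq_of_mem_nonBouquetEdges hloop hp
  rintro x ⟨hxU, hx⟩ z ⟨hzU, hz⟩
  change x ∈ ends p at hx
  change z ∈ ends p at hz
  rw [hpy, Sym2.mem_iff] at hx hz
  rcases hx with rfl | rfl
  · exact absurd hxU hvU
  rcases hz with rfl | rfl
  · exact absurd hzU hvU
  rfl

variable [Fintype V]

theorem exists_isOddThreeColoring_of_even_card (hloop : ∀ e, ¬ (ends e).IsDiag)
    (hconn : ∀ u u' : V, Relation.ReflTransGen (fun a b => ∃ e, ends e = s(a, b)) u u')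
    {e₁ e₂ : E} (hne : e₁ ≠ e₂) (hends : ends e₁ = ends e₂) (hV : Even (Fintype.card V)) :
    ∃ B C, IsOddThreeColoring ends e₁ B C := by
  have : Nonempty E := ⟨e₁⟩
  obtain ⟨r, -⟩ : ∃ r, r ∈ ends e₁ := ⟨_, Sym2.out_fst_mem _⟩
  set S := univ.erase e₁
  have hadj : ∀ a b, (∃ e, ends e = s(a, b)) → ∃ e ∈ (S : Set E), ends e = s(a, b) := by
    rintro a b ⟨e, he⟩
    by_cases h : e = e₁
    · exact ⟨e₂, by simp [S, hne.symm], by rw [← hends, ← h, he]⟩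
    · exact ⟨e, by simp [S, h], he⟩
  obtain ⟨t⟩ := nonempty_spanningTree (ends := ends) (S := ↑S) (U := Set.univ) (r := r)
    fun u _ => Relation.ReflTransGen.mono (fun a b hab => ⟨trivial, trivial, hadj a b hab⟩) _ _
      (hconn r u)
  set T := univ.filter fun u => (degree ends S u : ZMod 2) = 0
  have hT : Even #T := by
    rw [← ZMod.natCast_eq_zero_iff_even, natCast_card_filter_eq_zero, sum_add_distrib,
      sum_natCast_degree hloop, sum_const, card_univ, nsmul_one, zero_add,
      ZMod.natCast_eq_zero_iff_even]
    exact hV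
  obtain ⟨J, hJ, hdegJ⟩ := t.exists_join (T := T) (by simp) hT
  obtain ⟨B, hBJ, hB, hC⟩ := (t.isForestOn.mono hJ).exists_odd_bicoloring
  have hJS : J ⊆ S := fun e he => by
    obtain ⟨y, hy, rfl⟩ := hJ he
    exact t.parentEdge_mem y hy.1 hy.2
  refine ⟨B, J \ B, disjoint_sdiff, ?_, hB, hC, fun u _ => Or.inr ?_⟩
  · rw [union_sdiff_of_subset hBJ]
    exact fun h => by simpa [S] using hJS h
  · rw [union_sdiff_of_subset hBJ, ← ZMod.natCast_eq_one_iff_odd]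
    have h := congrArg (Nat.cast : ℕ → ZMod 2) (degree_sdiff_add (ends := ends) hJS u)
    push_cast at h
    rw [hdegJ] at h
    simp only [T, mem_filter, mem_univ, true_and] at h
    show (degree ends (S \ J) u : ZMod 2) = 1
    rw [eq_sub_of_add_eq h, CharTwo.sub_eq_add, ZMod.ite_eq_zero_eq_add_one, ← add_assoc,
      CharTwo.add_self_eq_zero, zero_add]

lemma isOddOn_erase_sdiff_union_singleton (hdegw : Odd (degree ends univ w)) {e₁ e₂ : E}
    (hne : e₁ ≠ e₂) (he₁ : ends e₁ = s(v, w)) (he₂ : ends e₂ = s(v, w))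
    (hbouquet : ∀ e, ends e = s(v, w) → e = e₁ ∨ e = e₂) {X : Finset E}
    (hX : ∀ e, v ∈ ends e → ends e ≠ s(v, w) → e ∈ X) (hXw : degree ends X w = 0)
    (hdeg : ∀ u ∈ ({v, w}ᶜ : Finset V), (degree ends X u : ZMod 2) = degree ends univ u + 1) :
    IsOddOn ends Set.univ (univ.erase e₁ \ (X ∪ {e₂})) := by
  have hnot : ∀ e, ends e = s(v, w) → e ∉ X := fun e he hmem =>
    absurd (degree_eq_zero_iff.1 hXw e hmem) (by simp [he])
  have he₁X : e₁ ∉ X ∪ {e₂} := by simpa [hne] using hnot e₁ he₁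
  have hdeg' : ∀ u, (degree ends (univ.erase e₁ \ (X ∪ {e₂})) u : ZMod 2) =
      degree ends univ u + degree ends {e₁} u + (degree ends X u + degree ends {e₂} u) := by
    intro u
    rw [natCast_degree_erase_sdiff he₁X,
      degree_union (disjoint_singleton_right.2 (hnot e₂ he₂)), Nat.cast_add]
  refine isOddOn_univ_of_compl_pair (v := v) (w := w) (fun u hu => Or.inr ?_) (Or.inl ?_)
    (Or.inr ?_)
  · have hu' : u ≠ v ∧ u ≠ w := by simp at hu; tauto
    rw [← ZMod.natCast_eq_one_iff_odd, hdeg', hdeg u (mem_coe.1 hu), degree_singleton,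
      degree_singleton, if_neg (by simp [he₁, hu'.1, hu'.2]), if_neg (by simp [he₂, hu'.1, hu'.2])]
    push_cast
    linear_combination CharTwo.add_self_eq_zero (degree ends univ u : ZMod 2)
  · refine degree_eq_zero_iff.2 fun e he hve => ?_
    rw [mem_sdiff, mem_erase, mem_union, mem_singleton] at he
    by_cases hvw : ends e = s(v, w)
    · rcases hbouquet e hvw with rfl | rfl
      exacts [he.1.1 rfl, he.2 (Or.inr rfl)]
    · exact he.2 (Or.inl (hX e hve hvw))
  · rw [← ZMod.natCast_eq_one_iff_odd, hdeg', hXw, degree_singleton, degree_singleton,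
      if_pos (by simp [he₁]), if_pos (by simp [he₂]), ZMod.natCast_eq_one_iff_odd.2 hdegw]
    decide

theorem isOddThreeColoring_union_singleton (hdegw : Odd (degree ends univ w)) {e₁ e₂ : E}
    (hne : e₁ ≠ e₂) (he₁ : ends e₁ = s(v, w)) (he₂ : ends e₂ = s(v, w))
    (hbouquet : ∀ e, ends e = s(v, w) → e = e₁ ∨ e = e₂)
    {B C : Finset E} (hBC : Disjoint B C) (hB : IsOddOn ends ↑({v, w}ᶜ : Finset V) B)
    (hC : IsOddOn ends ↑({v, w}ᶜ : Finset V) C) (hBv : Even (degree ends B v))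
    (hv : Odd (degree ends (B ∪ C) v)) (hw : degree ends (B ∪ C) w = 0)
    (hat : ∀ e, v ∈ ends e → ends e ≠ s(v, w) → e ∈ B ∪ C)
    (hdeg : ∀ u ∈ ({v, w}ᶜ : Finset V),
      (degree ends (B ∪ C) u : ZMod 2) = degree ends univ u + 1) :
    IsOddThreeColoring ends e₁ (B ∪ {e₂}) C := by
  have hnot : ∀ e, ends e = s(v, w) → e ∉ B ∪ C := fun e he h =>
    degree_eq_zero_iff.1 hw e h (by simp [he])
  have he₂B : e₂ ∉ B := fun h => hnot e₂ he₂ (mem_union_left _ h)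
  have he₂C : e₂ ∉ C := fun h => hnot e₂ he₂ (mem_union_right _ h)
  have hBCw : degree ends B w + degree ends C w = 0 := by rwa [degree_union hBC] at hw
  rw [degree_union hBC] at hv
  have hunion : B ∪ {e₂} ∪ C = B ∪ C ∪ {e₂} := union_right_comm _ _ _
  refine ⟨disjoint_union_left.2 ⟨hBC, disjoint_singleton_left.2 he₂C⟩, ?_,
    isOddOn_union_singleton he₂ he₂B hB hBv (by omega),
    isOddOn_univ_of_compl_pair hC (Or.inr ((Nat.odd_add'.1 hv).2 hBv)) (Or.inl (by omega)), ?_⟩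
  · rw [hunion, mem_union, mem_singleton, not_or]
    exact ⟨hnot e₁ he₁, hne⟩
  · rw [hunion]
    exact isOddOn_erase_sdiff_union_singleton hdegw hne he₁ he₂ hbouquet hat hw hdeg

lemma even_card_filter_degree_add_degree_nonBouquetEdges (hloop : ∀ e, ¬ (ends e).IsDiag)
    (hvw : v ≠ w) (hdegv : Odd (degree ends univ v)) (hdegw : Odd (degree ends univ w))
    {e₁ e₂ : E} (hne : e₁ ≠ e₂) (he₁ : ends e₁ = s(v, w)) (he₂ : ends e₂ = s(v, w))
    (hbouquet : ∀ e, ends e = s(v, w) → e = e₁ ∨ e = e₂) (hV : Odd (Fintype.card V)) :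
    Even #{u ∈ ({v, w}ᶜ : Finset V) |
      (degree ends univ u + degree ends (nonBouquetEdges ends v w) u : ZMod 2) = 0} := by
  set P := nonBouquetEdges ends v w
  rw [← ZMod.natCast_eq_zero_iff_even, natCast_card_filter_eq_zero]
  have hP := congrArg (Nat.cast : ℕ → ZMod 2) (card_nonBouquetEdges_add_two hne he₁ he₂ hbouquet)
  push_cast at hP
  rw [ZMod.natCast_eq_one_iff_odd.2 hdegv] at hP
  have hsum := sum_compl_add_sum ({v, w} : Finset V)
    (fun u => (degree ends univ u + degree ends P u : ZMod 2) + 1)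
  rw [sum_pair hvw] at hsum
  simp only [sum_add_distrib, sum_const, card_univ, nsmul_eq_mul, mul_one,
    sum_natCast_degree hloop] at hsum ⊢
  rw [degree_nonBouquetEdges_self, degree_nonBouquetEdges_right hloop hvw,
    ZMod.natCast_eq_one_iff_odd.2 hdegv, ZMod.natCast_eq_one_iff_odd.2 hdegw,
    ZMod.natCast_eq_one_iff_odd.2 hV] at hsum
  have h2 : (2 : ZMod 2) = 0 := rfl
  linear_combination hsum + hP - (#P + 2 : ZMod 2) * h2

theorem exists_isOddThreeColoring_of_subset (hdegw : Odd (degree ends univ w)) {e₁ e₂ : E}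
    (hne : e₁ ≠ e₂) (he₁ : ends e₁ = s(v, w)) (he₂ : ends e₂ = s(v, w))
    (hbouquet : ∀ e, ends e = s(v, w) → e = e₁ ∨ e = e₂) {X B : Finset E} (hBX : B ⊆ X)
    (hB : IsOddOn ends ↑({v, w}ᶜ : Finset V) B)
    (hC : IsOddOn ends ↑({v, w}ᶜ : Finset V) (X \ B))
    (hv : Odd (degree ends X v)) (hw : degree ends X w = 0)
    (hat : ∀ e, v ∈ ends e → ends e ≠ s(v, w) → e ∈ X)
    (hdeg : ∀ u ∈ ({v, w}ᶜ : Finset V), (degree ends X u : ZMod 2) = degree ends univ u + 1) :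
    ∃ B C, IsOddThreeColoring ends e₁ B C := by
  by_cases hBv : Even (degree ends B v)
  · rw [← union_sdiff_of_subset hBX] at hv hw hat hdeg
    exact ⟨_, _, isOddThreeColoring_union_singleton hdegw hne he₁ he₂ hbouquet disjoint_sdiff hB hC
      hBv hv hw hat hdeg⟩
  · have hCv : Even (degree ends (X \ B) v) := by
      rw [← degree_sdiff_add hBX] at hv
      exact Nat.not_odd_iff_even.1 fun h => hBv ((Nat.odd_add.1 hv).1 h)
    rw [← sdiff_union_of_subset hBX] at hv hw hat hdeg
    exact ⟨_, _, isOddThreeColoring_union_singleton hdegw hne he₁ he₂ hbouquet sdiff_disjoint hC hB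
      hCv hv hw hat hdeg⟩

theorem exists_isOddThreeColoring_of_odd_card (hloop : ∀ e, ¬ (ends e).IsDiag) (hvw : v ≠ w)
    (hdegv : Odd (degree ends univ v)) (hdegw : Odd (degree ends univ w))
    {e₁ e₂ : E} (hne : e₁ ≠ e₂) (he₁ : ends e₁ = s(v, w)) (he₂ : ends e₂ = s(v, w))
    (hbouquet : ∀ e, ends e = s(v, w) → e = e₁ ∨ e = e₂)
    (hconn : ∀ u u' : V, u ∉ ({v, w} : Set V) → u' ∉ ({v, w} : Set V) →
      Relation.ReflTransGen (fun a b => a ∉ ({v, w} : Set V) ∧ b ∉ ({v, w} : Set V) ∧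
        ∃ e, ends e = s(a, b)) u u')
    (hV : Odd (Fintype.card V)) : ∃ B C, IsOddThreeColoring ends e₁ B C := by
  have : Nonempty E := ⟨e₁⟩
  set W : Finset V := {v, w}ᶜ
  have hW : ∀ u, u ∈ W ↔ u ∉ ({v, w} : Set V) := fun u => by simp [W]
  have hvW : v ∉ W := by simp [W]
  have hwW : w ∉ W := by simp [W]
  obtain ⟨r, hr⟩ : W.Nonempty := by
    rw [← card_pos, card_compl, card_pair hvw]
    have := card_le_univ ({v, w} : Finset V)
    rw [card_pair hvw] at this
    obtain ⟨k, hk⟩ := hV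
    omega
  obtain ⟨t⟩ := nonempty_spanningTree (ends := ends) (S := Set.univ) (U := ↑W) (r := r)
    fun u hu => Relation.ReflTransGen.mono (fun a b ⟨ha, hb, e, he⟩ =>
      ⟨(hW a).2 ha, (hW b).2 hb, e, trivial, he⟩) _ _ (hconn r u ((hW r).1 hr) ((hW u).1 hu))
  set P := nonBouquetEdges ends v w
  -- the leftover degree `deg u - deg_P u - deg_J u` at `u ∈ W` is odd iff `u ∈ T ↔ Odd (deg_J u)`
  set T := W.filter fun u => (degree ends univ u + degree ends P u : ZMod 2) = 0
  obtain ⟨J, hJ, hdegJ⟩ := t.exists_join (T := T) (fun u hu => (mem_filter.1 hu).1)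
    (even_card_filter_degree_add_degree_nonBouquetEdges hloop hvw hdegv hdegw hne he₁ he₂
      hbouquet hV)
  have hJ_not_mem : ∀ x ∉ W, ∀ e ∈ J, x ∉ ends e := fun x hx e he hxe =>
    hx (t.mem_of_mem_ends (hJ he) hxe)
  have hJP : Disjoint J P := disjoint_left.2 fun e heJ heP =>
    hJ_not_mem v hvW e heJ (mem_nonBouquetEdges.1 heP).1
  have hforest : IsForestOn ends ↑W ↑(J ∪ P) := by
    rw [coe_union]
    exact (t.isForestOn.mono hJ).union_of_subsingleton fun p hp =>
      subsingleton_of_mem_nonBouquetEdges hloop (mt mem_coe.1 hvW) hp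
  obtain ⟨B, hBX, hB, hC⟩ := hforest.exists_odd_bicoloring
  refine exists_isOddThreeColoring_of_subset hdegw hne he₁ he₂ hbouquet hBX hB hC ?_ ?_
    (fun e hv hvw => mem_union_right _ (mem_nonBouquetEdges.2 ⟨hv, hvw⟩)) fun u hu => ?_
  · rw [degree_union hJP, degree_eq_zero_iff.2 (hJ_not_mem v hvW), zero_add,
      degree_nonBouquetEdges_self]
    rw [← card_nonBouquetEdges_add_two hne he₁ he₂ hbouquet] at hdegv
    exact (Nat.odd_add.1 hdegv).2 even_two
  · rw [degree_union hJP, degree_eq_zero_iff.2 (hJ_not_mem w hwW),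
      degree_nonBouquetEdges_right hloop hvw]
  · replace hu : u ∈ W := hu
    rw [degree_union hJP, Nat.cast_add, hdegJ]
    simp only [T, mem_filter, hu, true_and, ZMod.ite_eq_zero_eq_add_one]
    linear_combination CharTwo.add_self_eq_zero (degree ends P u : ZMod 2)

end FintypeEdges

end Multigraph

open Multigraph

theorem stmt_17_general {V E : Type*} [Fintype V] [Fintype E]
    (ends : E → Sym2 V)
    (hloopless : ∀ e, ¬ (ends e).IsDiag)
    (hconn : ∀ u u' : V,
      Relation.ReflTransGen (fun a b => ∃ e, ends e = s(a, b)) u u')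
    (v w : V) (hvw : v ≠ w)
    (hdegv : Odd {e | v ∈ ends e}.ncard)
    (hdegw : Odd {e | w ∈ ends e}.ncard)
    (hbouquet : {e | ends e = s(v, w)}.ncard = 2)
    (hconnvw : ∀ u u' : V, u ∉ ({v, w} : Set V) → u' ∉ ({v, w} : Set V) →
      Relation.ReflTransGen
        (fun a b => a ∉ ({v, w} : Set V) ∧ b ∉ ({v, w} : Set V) ∧
          ∃ e, ends e = s(a, b)) u u') :
    ∃ f : E, ∃ φ : E → Fin 3, ∀ (u : V) (j : Fin 3),
      {e | e ≠ f ∧ φ e = j ∧ u ∈ ends e}.ncard = 0 ∨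
        Odd {e | e ≠ f ∧ φ e = j ∧ u ∈ ends e}.ncard := by
  obtain ⟨e₁, e₂, hne, hset⟩ := Set.ncard_eq_two.1 hbouquet
  have hmem : ∀ e, ends e = s(v, w) ↔ e = e₁ ∨ e = e₂ := fun e => Set.ext_iff.1 hset e
  have he₁ : ends e₁ = s(v, w) := (hmem e₁).2 (Or.inl rfl)
  have he₂ : ends e₂ = s(v, w) := (hmem e₂).2 (Or.inr rfl)
  obtain ⟨B, C, h⟩ : ∃ B C, IsOddThreeColoring ends e₁ B C := by
    rcases Nat.even_or_odd (Fintype.card V) with hV | hV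
    · exact exists_isOddThreeColoring_of_even_card hloopless hconn hne (he₁.trans he₂.symm) hV
    · rw [ncard_setOf_mem_ends] at hdegv hdegw
      exact exists_isOddThreeColoring_of_odd_card hloopless hvw hdegv hdegw hne he₁ he₂
        (fun e => (hmem e).1) hconnvw hV
  exact ⟨e₁, h.exists_fin_three⟩

/-- Let `G` be a connected loopless multigraph with two odd-degree vertices `v`, `w`
joined by exactly two parallel edges. If `G − v` and `G − {v, w}` are connected, then
there is an edge `f` such that `G \ {f}` admits an odd 3-edge-coloring. -/
theorem stmt_17 {V E : Type*} [Fintype V] [Fintype E]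
    (ends : E → Sym2 V)
    (hloopless : ∀ e, ¬ (ends e).IsDiag)
    (hconn : ∀ u u' : V,
      Relation.ReflTransGen (fun a b => ∃ e, ends e = s(a, b)) u u')
    (v w : V) (hvw : v ≠ w)
    (hdegv : Odd {e | v ∈ ends e}.ncard)
    (hdegw : Odd {e | w ∈ ends e}.ncard)
    (hbouquet : {e | ends e = s(v, w)}.ncard = 2)
    (hconnv : ∀ u u' : V, u ≠ v → u' ≠ v →
      Relation.ReflTransGen
        (fun a b => a ≠ v ∧ b ≠ v ∧ ∃ e, ends e = s(a, b)) u u')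
    (hconnvw : ∀ u u' : V, u ∉ ({v, w} : Set V) → u' ∉ ({v, w} : Set V) →
      Relation.ReflTransGen
        (fun a b => a ∉ ({v, w} : Set V) ∧ b ∉ ({v, w} : Set V) ∧
          ∃ e, ends e = s(a, b)) u u') :
    ∃ f : E, ∃ φ : E → Fin 3, ∀ (u : V) (j : Fin 3),
      {e | e ≠ f ∧ φ e = j ∧ u ∈ ends e}.ncard = 0 ∨
        Odd {e | e ≠ f ∧ φ e = j ∧ u ∈ ends e}.ncard :=
  stmt_17_general ends hloopless hconn v w hvw hdegv hdegw hbouquet hconnvw
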